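/- arXiv:2407.07421 — 5 statements merged into one kernel-verified Lean document; each statement's English description precedes it below -/
import Mathlib

section
/- Let E be a real inner product space, f : E → ℝ differentiable with L-Lipschitz gradient (L ≥ 0), and ρ > 0. Suppose U, U⁺, Z⁺, Y, Y⁺ ∈ E satisfy: the previous-round optimality condition ∇f(U) = −Y; the current primal optimality condition ∇f(U⁺) + Y + ρ(U⁺ − Z⁺) = 0; and the dual update Y⁺ = Y + ρ(U⁺ − Z⁺). Then ‖Y⁺ − Y‖ ≤ L‖U⁺ − U‖, and consequently ‖Y⁺ − Y‖² ≤ L²‖U⁺ − U‖². -/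
open scoped RealInnerProductSpace

/-- Lemma 1 (bound on successive difference of dual variables): under the
previous-round optimality condition `∇f(U) = -Y`, the current primal optimality
condition `∇f(U⁺) + Y + ρ(U⁺ - Z⁺) = 0` and the dual update
`Y⁺ = Y + ρ(U⁺ - Z⁺)`, we have `‖Y⁺ - Y‖ ≤ L‖U⁺ - U‖` and hence
`‖Y⁺ - Y‖² ≤ L²‖U⁺ - U‖²`. -/
theorem stmt_0 {E : Type*} [NormedAddCommGroup E] [InnerProductSpace ℝ E] [CompleteSpace E]
    (f : E → ℝ) (f' : E → E) (L ρ : ℝ) (hL : 0 ≤ L) (hρ : 0 < ρ)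
    (hdiff : ∀ x, HasGradientAt f (f' x) x)
    (hlip : ∀ x y, ‖f' x - f' y‖ ≤ L * ‖x - y‖)
    (U Up Zp Y Yp : E)
    (hprev : f' U = -Y)
    (hopt : f' Up + Y + ρ • (Up - Zp) = 0)
    (hdual : Yp = Y + ρ • (Up - Zp)) :
    ‖Yp - Y‖ ≤ L * ‖Up - U‖ ∧ ‖Yp - Y‖ ^ 2 ≤ L ^ 2 * ‖Up - U‖ ^ 2 := by
  have key : Yp - Y = f' U - f' Up := by
    have : f' Up = -Yp := by
      rw [hdual]; linear_combination (norm := abel) hopt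
    rw [hprev, this]; abel
  have h1 : ‖Yp - Y‖ ≤ L * ‖Up - U‖ := by
    rw [key, ← norm_neg]
    have : -(f' U - f' Up) = f' Up - f' U := by abel
    rw [this, ← norm_neg (Up - U)]
    have : -(Up - U) = U - Up := by abel
    rw [this]
    simpa [norm_sub_rev] using hlip Up U
  exact ⟨h1, by nlinarith [norm_nonneg (Yp - Y), norm_nonneg (Up - U)]⟩
end

section
/- Let E be a real inner product space and N ≥ 1. For each i = 1,…,N let f_i : E → ℝ be differentiable with L_i-Lipschitz gradient, and let ρ_i > 0, μ_i > 0. Suppose points U_i, U_i⁺, Z, Z⁺, Y_i, Y_i⁺ ∈ E satisfy: (i) ∇f_i(U_i) = −Y_i (previous-round optimality); (ii) U_i⁺ is a global minimizer of the μ_i-strongly convex function g_i(U) = f_i(U) + ⟨Y_i, U − Z⟩ + (ρ_i/2)‖U − Z‖²; (iii) Z⁺ is a global minimizer of the map Z' ↦ 𝓛({U_i⁺}, Z', {Y_i}); (iv) ∇f_i(U_i⁺) + Y_i + ρ_i(U_i⁺ − Z⁺) = 0; and (v) Y_i⁺ = Y_i + ρ_i(U_i⁺ − Z⁺). Then, with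 γ = Σ_{i=1}^N ρ_i, 𝓛({U_i⁺}, Z⁺, {Y_i⁺}) − 𝓛({U_i}, Z, {Y_i}) ≤ Σ_{i=1}^N (L_i²/ρ_i − μ_i/2)‖U_i⁺ − U_i‖² − (γ/2)‖Z⁺ − Z‖². -/
/-!
Split the change of `𝓛` along the three updates `U → U⁺`, `Z → Z⁺`, `Y → Y⁺`.
Both primal steps minimize strongly convex functions (in `Z`, `𝓛` minus `(γ/2)‖Z‖²` is affine),
and at the minimizer `x₀` of an `m`-strongly convex `g` one has
`g x₀ + (m/2)‖x - x₀‖² ≤ g x`; this yields the decreases `(μᵢ/2)‖Uᵢ⁺ - Uᵢ‖²` and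
`(γ/2)‖Z⁺ - Z‖²`. The dual step raises `𝓛` by `∑ ρᵢ‖Uᵢ⁺ - Z⁺‖²`, and the two optimality
conditions give `ρᵢ(Uᵢ⁺ - Z⁺) = ∇fᵢ(Uᵢ) - ∇fᵢ(Uᵢ⁺)`, so the Lipschitz bound turns this increase
into `∑ (Lᵢ²/ρᵢ)‖Uᵢ⁺ - Uᵢ‖²`.
-/

open scoped RealInnerProductSpace

/-- The augmented Lagrangian of the FedPCA consensus problem. -/
noncomputable def augLag {E : Type*} [NormedAddCommGroup E] [InnerProductSpace ℝ E]
    (N : ℕ) (f : Fin N → E → ℝ) (ρ : Fin N → ℝ)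
    (U : Fin N → E) (Z : E) (Y : Fin N → E) : ℝ :=
  (∑ i, f i (U i)) + (∑ i, ⟪Y i, U i - Z⟫) + (∑ i, ρ i / 2 * ‖U i - Z‖ ^ 2)

open Filter Topology Set

lemma StrongConvexOn.add_sq_norm_sub_le_of_isMinOn {E : Type*} [NormedAddCommGroup E]
    [NormedSpace ℝ E] {s : Set E} {m : ℝ} {f : E → ℝ} {x₀ x : E}
    (hf : StrongConvexOn s m f) (hx₀ : x₀ ∈ s) (hx : x ∈ s) (hmin : IsMinOn f s x₀) :
    f x₀ + m / 2 * ‖x - x₀‖ ^ 2 ≤ f x := by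
  set c := m / 2 * ‖x - x₀‖ ^ 2
  have hstep : ∀ t ∈ Ioo (0 : ℝ) 1, f x₀ + (1 - t) * c ≤ f x := by
    rintro t ⟨ht₀, ht₁⟩
    have hmem := hf.1 hx₀ hx (sub_nonneg.2 ht₁.le) ht₀.le (sub_add_cancel 1 t)
    have hconv : f ((1 - t) • x₀ + t • x) ≤ (1 - t) * f x₀ + t * f x - (1 - t) * t * c := by
      have h := hf.2 hx₀ hx (sub_nonneg.2 ht₁.le) ht₀.le (sub_add_cancel 1 t)
      rwa [norm_sub_rev] at h
    have hle : f x₀ ≤ f ((1 - t) • x₀ + t • x) := hmin hmem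
    have : t * (f x₀ + (1 - t) * c) ≤ t * f x := by linear_combination hle + hconv
    exact le_of_mul_le_mul_left this ht₀
  have hlim : Tendsto (fun t : ℝ => f x₀ + (1 - t) * c) (𝓝[>] 0) (𝓝 (f x₀ + c)) := by
    have : Continuous (fun t : ℝ => f x₀ + (1 - t) * c) := by fun_prop
    simpa using (this.tendsto 0).mono_left nhdsWithin_le_nhds
  exact le_of_tendsto hlim (eventually_of_mem (Ioo_mem_nhdsGT one_pos) hstep)

section AugmentedLagrangian

variable {E : Type*} [NormedAddCommGroup E] [InnerProductSpace ℝ E] {N : ℕ}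
  (f : Fin N → E → ℝ) (ρ : Fin N → ℝ)

lemma augLag_eq_sum (U : Fin N → E) (Z : E) (Y : Fin N → E) :
    augLag N f ρ U Z Y = ∑ i, (f i (U i) + ⟪Y i, U i - Z⟫ + ρ i / 2 * ‖U i - Z‖ ^ 2) := by
  simp only [augLag, Finset.sum_add_distrib]

lemma augLag_sub_mul_sq_norm (U : Fin N → E) (Z : E) (Y : Fin N → E) :
    augLag N f ρ U Z Y - (∑ i, ρ i) / 2 * ‖Z‖ ^ 2 =
      ∑ i, (f i (U i) + ⟪Y i, U i⟫ + ρ i / 2 * ‖U i‖ ^ 2) - ⟪∑ i, (Y i + ρ i • U i), Z⟫ := by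
  rw [augLag_eq_sum, sum_inner, Finset.sum_div, Finset.sum_mul, ← Finset.sum_sub_distrib,
    ← Finset.sum_sub_distrib]
  refine Finset.sum_congr rfl fun i _ => ?_
  rw [inner_sub_right, norm_sub_sq_real, inner_add_left, real_inner_smul_left]
  ring

lemma strongConvexOn_augLag (U : Fin N → E) (Y : Fin N → E) :
    StrongConvexOn univ (∑ i, ρ i) (fun Z => augLag N f ρ U Z Y) := by
  rw [strongConvexOn_iff_convex]
  simp_rw [augLag_sub_mul_sq_norm]
  exact (convexOn_const _ convex_univ).sub ((innerSL ℝ _).toLinearMap.concaveOn convex_univ)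

lemma augLag_of_dual_ascent {U Y Yp : Fin N → E} {Z : E}
    (hdual : ∀ i, Yp i = Y i + ρ i • (U i - Z)) :
    augLag N f ρ U Z Yp = augLag N f ρ U Z Y + ∑ i, ρ i * ‖U i - Z‖ ^ 2 := by
  simp only [augLag_eq_sum, ← Finset.sum_add_distrib, hdual, inner_add_left,
    real_inner_smul_left, real_inner_self_eq_norm_sq]
  exact Finset.sum_congr rfl fun i _ => by ring

end AugmentedLagrangian

lemma mul_sq_norm_le_of_norm_smul_le {E : Type*} [NormedAddCommGroup E] [NormedSpace ℝ E]
    {ρ L a : ℝ} {v : E} (hρ : 0 < ρ) (h : ‖ρ • v‖ ≤ L * a) :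
    ρ * ‖v‖ ^ 2 ≤ L ^ 2 / ρ * a ^ 2 := by
  rw [norm_smul, Real.norm_of_nonneg hρ.le] at h
  rw [div_mul_eq_mul_div, le_div_iff₀ hρ, ← mul_pow]
  calc ρ * ‖v‖ ^ 2 * ρ = (ρ * ‖v‖) ^ 2 := by ring
    _ ≤ (L * a) ^ 2 := pow_le_pow_left₀ (by positivity) h 2

theorem stmt_4_general {E : Type*} [NormedAddCommGroup E] [InnerProductSpace ℝ E]
    (N : ℕ)
    (f : Fin N → E → ℝ) (f' : Fin N → E → E)
    (L ρ μ : Fin N → ℝ) (hρ : ∀ i, 0 < ρ i)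
    (hlip : ∀ i x y, ‖f' i x - f' i y‖ ≤ L i * ‖x - y‖)
    (U Up : Fin N → E) (Z Zp : E) (Y Yp : Fin N → E)
    (hprev : ∀ i, f' i (U i) = -(Y i))
    (hsc : ∀ i, ConvexOn ℝ Set.univ
      (fun V => (f i V + ⟪Y i, V - Z⟫ + ρ i / 2 * ‖V - Z‖ ^ 2) - μ i / 2 * ‖V‖ ^ 2))
    (hUmin : ∀ i (V : E),
      f i (Up i) + ⟪Y i, Up i - Z⟫ + ρ i / 2 * ‖Up i - Z‖ ^ 2 ≤
        f i V + ⟪Y i, V - Z⟫ + ρ i / 2 * ‖V - Z‖ ^ 2)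
    (hZmin : ∀ Z' : E, augLag N f ρ Up Zp Y ≤ augLag N f ρ Up Z' Y)
    (hopt : ∀ i, f' i (Up i) + Y i + ρ i • (Up i - Zp) = 0)
    (hdual : ∀ i, Yp i = Y i + ρ i • (Up i - Zp)) :
    augLag N f ρ Up Zp Yp - augLag N f ρ U Z Y ≤
      (∑ i, ((L i) ^ 2 / ρ i - μ i / 2) * ‖Up i - U i‖ ^ 2) -
        (∑ i, ρ i) / 2 * ‖Zp - Z‖ ^ 2 := by
  have hgrad_gap : ∀ i, ρ i • (Up i - Zp) = f' i (U i) - f' i (Up i) := fun i => by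
    rw [hprev i]
    linear_combination (norm := module) hopt i
  have hY_step : augLag N f ρ Up Zp Yp - augLag N f ρ Up Zp Y ≤
      ∑ i, L i ^ 2 / ρ i * ‖Up i - U i‖ ^ 2 := by
    rw [augLag_of_dual_ascent f ρ hdual, add_sub_cancel_left]
    refine Finset.sum_le_sum fun i _ => mul_sq_norm_le_of_norm_smul_le (hρ i) ?_
    rw [hgrad_gap i, norm_sub_rev (Up i)]
    exact hlip i _ _
  have hZ_step : augLag N f ρ Up Zp Y + (∑ i, ρ i) / 2 * ‖Z - Zp‖ ^ 2 ≤ augLag N f ρ Up Z Y :=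
    (strongConvexOn_augLag f ρ Up Y).add_sq_norm_sub_le_of_isMinOn (mem_univ _) (mem_univ _)
      (isMinOn_univ_iff.2 hZmin)
  have hU_step : augLag N f ρ Up Z Y + ∑ i, μ i / 2 * ‖Up i - U i‖ ^ 2 ≤ augLag N f ρ U Z Y := by
    simp only [augLag_eq_sum, ← Finset.sum_add_distrib, norm_sub_rev (Up _) (U _)]
    exact Finset.sum_le_sum fun i _ =>
      (strongConvexOn_iff_convex.2 (hsc i)).add_sq_norm_sub_le_of_isMinOn (mem_univ _)
        (mem_univ _) (isMinOn_univ_iff.2 (hUmin i))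
  simp only [sub_mul, Finset.sum_sub_distrib, norm_sub_rev Zp]
  linarith

/-- Lemma 2 (sufficient decrease of the augmented Lagrangian after one
full-participation ADMM round):
`𝓛({Uᵢ⁺}, Z⁺, {Yᵢ⁺}) - 𝓛({Uᵢ}, Z, {Yᵢ})
  ≤ Σᵢ (Lᵢ²/ρᵢ - μᵢ/2)‖Uᵢ⁺ - Uᵢ‖² - (γ/2)‖Z⁺ - Z‖²` with `γ = Σᵢ ρᵢ`. -/
theorem stmt_4 {E : Type*} [NormedAddCommGroup E] [InnerProductSpace ℝ E] [CompleteSpace E]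
    (N : ℕ) (hN : 1 ≤ N)
    (f : Fin N → E → ℝ) (f' : Fin N → E → E)
    (L ρ μ : Fin N → ℝ) (hL : ∀ i, 0 ≤ L i) (hρ : ∀ i, 0 < ρ i) (hμ : ∀ i, 0 < μ i)
    (hdiff : ∀ i x, HasGradientAt (f i) (f' i x) x)
    (hlip : ∀ i x y, ‖f' i x - f' i y‖ ≤ L i * ‖x - y‖)
    (U Up : Fin N → E) (Z Zp : E) (Y Yp : Fin N → E)
    (hprev : ∀ i, f' i (U i) = -(Y i))
    (hsc : ∀ i, ConvexOn ℝ Set.univ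
      (fun V => (f i V + ⟪Y i, V - Z⟫ + ρ i / 2 * ‖V - Z‖ ^ 2) - μ i / 2 * ‖V‖ ^ 2))
    (hUmin : ∀ i (V : E),
      f i (Up i) + ⟪Y i, Up i - Z⟫ + ρ i / 2 * ‖Up i - Z‖ ^ 2 ≤
        f i V + ⟪Y i, V - Z⟫ + ρ i / 2 * ‖V - Z‖ ^ 2)
    (hZmin : ∀ Z' : E, augLag N f ρ Up Zp Y ≤ augLag N f ρ Up Z' Y)
    (hopt : ∀ i, f' i (Up i) + Y i + ρ i • (Up i - Zp) = 0)
    (hdual : ∀ i, Yp i = Y i + ρ i • (Up i - Zp)) :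
    augLag N f ρ Up Zp Yp - augLag N f ρ U Z Y ≤
      (∑ i, ((L i) ^ 2 / ρ i - μ i / 2) * ‖Up i - U i‖ ^ 2) -
        (∑ i, ρ i) / 2 * ‖Zp - Z‖ ^ 2 :=
  stmt_4_general N f f' L ρ μ hρ hlip U Up Z Zp Y Yp hprev hsc hUmin hZmin hopt hdual
end

section
/- Let E be a real inner product space and N ≥ 1. For each i = 1,…,N let f_i : E → ℝ be differentiable with L_i-Lipschitz gradient and let ρ_i ≥ L_i be positive. Suppose the dual variables satisfy Y_i⁺ = −∇f_i(U_i⁺) for all i. Then the augmented Lagrangian is bounded below by the global objective evaluated at the consensus point: 𝓛({U_i⁺}, Z⁺, {Y_i⁺}) ≥ Σ_{i=1}^N f_i(Z⁺). -/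
/-!
Descent lemma: along the segment `t ↦ x + t (y - x)`, the derivative of `f` exceeds its value
at `t = 0` by at most `L t ‖y - x‖²` (Cauchy–Schwarz and the Lipschitz bound), so `f` minus its
first-order model at `x` minus `(L/2) t² ‖y - x‖²` is antitone on `[0, 1]`.
Applied with `x = Uᵢ⁺`, `y = Z⁺`: since `Yᵢ⁺ = -∇fᵢ(Uᵢ⁺)`, the multiplier term of the augmented
Lagrangian is exactly the first-order term, and `ρᵢ ≥ Lᵢ` absorbs the quadratic one.
-/

open scoped RealInnerProductSpace

section DescentLemma

variable {E : Type*} [NormedAddCommGroup E] [InnerProductSpace ℝ E] [CompleteSpace E]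

theorem HasGradientAt.hasDerivAt_comp_add_smul {f : E → ℝ} {g x v : E} {t : ℝ}
    (h : HasGradientAt f g (x + t • v)) :
    HasDerivAt (fun s : ℝ => f (x + s • v)) ⟪g, v⟫ t := by
  have hline : HasDerivAt (fun s : ℝ => x + s • v) v t := by
    simpa using ((hasDerivAt_id t).smul_const v).const_add x
  simpa [Function.comp_def] using h.hasFDerivAt.comp_hasDerivAt t hline

theorem le_add_inner_add_of_lipschitz_gradient {f : E → ℝ} {f' : E → E} {L : ℝ}
    (hf : ∀ x, HasGradientAt f (f' x) x) (hlip : ∀ x y, ‖f' x - f' y‖ ≤ L * ‖x - y‖)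
    (x y : E) : f y ≤ f x + ⟪f' x, y - x⟫ + L / 2 * ‖y - x‖ ^ 2 := by
  set v := y - x
  let φ : ℝ → ℝ := fun t => f (x + t • v) - t * ⟪f' x, v⟫ - L / 2 * t ^ 2 * ‖v‖ ^ 2
  have hφ : ∀ t, HasDerivAt φ (⟪f' (x + t • v), v⟫ - ⟪f' x, v⟫ - L * t * ‖v‖ ^ 2) t := fun t =>
    ((((hf (x + t • v)).hasDerivAt_comp_add_smul).fun_sub
      ((hasDerivAt_id t).mul_const ⟪f' x, v⟫)).fun_sub
      (((hasDerivAt_pow 2 t).const_mul (L / 2)).mul_const (‖v‖ ^ 2))).congr_deriv (by ring)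
  have hφ_nonpos : ∀ t ∈ interior (Set.Icc (0 : ℝ) 1),
      ⟪f' (x + t • v), v⟫ - ⟪f' x, v⟫ - L * t * ‖v‖ ^ 2 ≤ 0 := by
    intro t ht
    rw [interior_Icc] at ht
    have hgrad : ‖f' (x + t • v) - f' x‖ ≤ L * ‖t • v‖ := by
      simpa using hlip (x + t • v) x
    calc ⟪f' (x + t • v), v⟫ - ⟪f' x, v⟫ - L * t * ‖v‖ ^ 2
        = ⟪f' (x + t • v) - f' x, v⟫ - L * ‖t • v‖ * ‖v‖ := by
          rw [inner_sub_left, norm_smul, Real.norm_of_nonneg ht.1.le]; ring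
      _ ≤ ‖f' (x + t • v) - f' x‖ * ‖v‖ - L * ‖t • v‖ * ‖v‖ := by
          gcongr; exact real_inner_le_norm _ _
      _ ≤ 0 := by nlinarith [norm_nonneg v]
  have hanti : AntitoneOn φ (Set.Icc 0 1) :=
    antitoneOn_of_hasDerivWithinAt_nonpos (convex_Icc 0 1)
      (fun t _ => (hφ t).continuousAt.continuousWithinAt) (fun t _ => (hφ t).hasDerivWithinAt)
      hφ_nonpos
  have hφ01 : φ 1 ≤ φ 0 :=
    hanti (Set.left_mem_Icc.2 zero_le_one) (Set.right_mem_Icc.2 zero_le_one) zero_le_one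
  have hφ0 : φ 0 = f x := by simp [φ]
  have hφ1 : φ 1 = f y - ⟪f' x, y - x⟫ - L / 2 * ‖y - x‖ ^ 2 := by simp [φ, v]
  linarith

end DescentLemma

theorem le_add_inner_neg_gradient_add_of_le {E : Type*} [NormedAddCommGroup E]
    [InnerProductSpace ℝ E] [CompleteSpace E] {f : E → ℝ} {f' : E → E} {L ρ : ℝ} (hLρ : L ≤ ρ)
    (hf : ∀ x, HasGradientAt f (f' x) x) (hlip : ∀ x y, ‖f' x - f' y‖ ≤ L * ‖x - y‖)
    (U Z : E) : f Z ≤ f U + ⟪-f' U, U - Z⟫ + ρ / 2 * ‖U - Z‖ ^ 2 := by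
  have hdescent := le_add_inner_add_of_lipschitz_gradient hf hlip U Z
  have hinner : ⟪-f' U, U - Z⟫ = ⟪f' U, Z - U⟫ := by
    rw [inner_neg_left, ← inner_neg_right, neg_sub]
  rw [hinner, norm_sub_rev]
  nlinarith [sq_nonneg ‖Z - U‖]

theorem stmt_6_general {E : Type*} [NormedAddCommGroup E] [InnerProductSpace ℝ E] [CompleteSpace E]
    (N : ℕ)
    (f : Fin N → E → ℝ) (f' : Fin N → E → E)
    (L ρ : Fin N → ℝ) (hρL : ∀ i, L i ≤ ρ i)
    (hdiff : ∀ i x, HasGradientAt (f i) (f' i x) x)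
    (hlip : ∀ i x y, ‖f' i x - f' i y‖ ≤ L i * ‖x - y‖)
    (Up : Fin N → E) (Zp : E) (Yp : Fin N → E)
    (hYp : ∀ i, Yp i = -(f' i (Up i))) :
    (∑ i, f i Zp) ≤ augLag N f ρ Up Zp Yp := by
  rw [augLag, ← Finset.sum_add_distrib, ← Finset.sum_add_distrib]
  refine Finset.sum_le_sum fun i _ => ?_
  rw [hYp i]
  exact le_add_inner_neg_gradient_add_of_le (hρL i) (hdiff i) (hlip i) (Up i) Zp

/-- Lower bound for the augmented Lagrangian (proof of Lemma 2): if each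
`∇fᵢ` is `Lᵢ`-Lipschitz, `ρᵢ ≥ Lᵢ` with `ρᵢ > 0`, and the dual variables
satisfy `Yᵢ⁺ = -∇fᵢ(Uᵢ⁺)`, then
`𝓛({Uᵢ⁺}, Z⁺, {Yᵢ⁺}) ≥ Σᵢ fᵢ(Z⁺)`. -/
theorem stmt_6 {E : Type*} [NormedAddCommGroup E] [InnerProductSpace ℝ E] [CompleteSpace E]
    (N : ℕ) (hN : 1 ≤ N)
    (f : Fin N → E → ℝ) (f' : Fin N → E → E)
    (L ρ : Fin N → ℝ) (hρpos : ∀ i, 0 < ρ i) (hρL : ∀ i, L i ≤ ρ i)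
    (hdiff : ∀ i x, HasGradientAt (f i) (f' i x) x)
    (hlip : ∀ i x y, ‖f' i x - f' i y‖ ≤ L i * ‖x - y‖)
    (Up : Fin N → E) (Zp : E) (Yp : Fin N → E)
    (hYp : ∀ i, Yp i = -(f' i (Up i))) :
    (∑ i, f i Zp) ≤ augLag N f ρ Up Zp Yp :=
  stmt_6_general N f f' L ρ hρL hdiff hlip Up Zp Yp hYp
end

section
/- Let E be a real inner product space and N ≥ 1. For each i = 1,…,N let f_i : E → ℝ be differentiable with L_i-Lipschitz gradient and ρ_i > 0, and suppose the optimality conditions ∇f_i(U_i⁺) + Y_i + ρ_i(U_i⁺ − Z⁺) = 0 hold for all i. Set σ₁ = max{Σ_{i=1}^N ρ_i, max_{1≤i≤N}(L_i + ρ_i)}. Then Σ_{i=1}^N ‖∇f_i(U_i) + Y_i + ρ_i(U_i − Z)‖ ≤ σ₁ (‖Z⁺ − Z‖ + Σ_{i=1}^N ‖U_i⁺ − U_i‖). -/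
open Finset

/-- Inequality (31) in the proof of Theorem 3: with
`σ₁ = max{Σᵢ ρᵢ, maxᵢ (Lᵢ + ρᵢ)}`, under the optimality conditions
`∇fᵢ(Uᵢ⁺) + Yᵢ + ρᵢ(Uᵢ⁺ - Z⁺) = 0`,
`Σᵢ ‖∇fᵢ(Uᵢ) + Yᵢ + ρᵢ(Uᵢ - Z)‖ ≤ σ₁(‖Z⁺ - Z‖ + Σᵢ ‖Uᵢ⁺ - Uᵢ‖)`. -/
theorem stmt_10 {E : Type*} [NormedAddCommGroup E] [InnerProductSpace ℝ E] [CompleteSpace E]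
    (N : ℕ) (hN : 1 ≤ N)
    (f : Fin N → E → ℝ) (f' : Fin N → E → E)
    (L ρ : Fin N → ℝ) (hρ : ∀ i, 0 < ρ i)
    (hdiff : ∀ i x, HasGradientAt (f i) (f' i x) x)
    (hlip : ∀ i x y, ‖f' i x - f' i y‖ ≤ L i * ‖x - y‖)
    (U Up : Fin N → E) (Z Zp : E) (Y : Fin N → E)
    (hopt : ∀ i, f' i (Up i) + Y i + ρ i • (Up i - Zp) = 0)
    (σ₁ : ℝ)
    (hσ₁ : σ₁ = max (∑ i, ρ i)
      (Finset.univ.sup' (Finset.univ_nonempty_iff.mpr ⟨(⟨0, hN⟩ : Fin N)⟩)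
        (fun i => L i + ρ i))) :
    ∑ i, ‖f' i (U i) + Y i + ρ i • (U i - Z)‖ ≤
      σ₁ * (‖Zp - Z‖ + ∑ i, ‖Up i - U i‖) := by
  have key : ∀ i, ‖f' i (U i) + Y i + ρ i • (U i - Z)‖ ≤
      (L i + ρ i) * ‖Up i - U i‖ + ρ i * ‖Zp - Z‖ := by
    intro i
    have h0 := hopt i
    have heq : f' i (U i) + Y i + ρ i • (U i - Z) =
        (f' i (U i) - f' i (Up i)) + (ρ i • (U i - Up i) + ρ i • (Zp - Z)) := by
      have : f' i (Up i) = -(Y i + ρ i • (Up i - Zp)) := by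
        linear_combination (norm := module) h0
      rw [this]; module
    rw [heq]
    calc ‖(f' i (U i) - f' i (Up i)) + (ρ i • (U i - Up i) + ρ i • (Zp - Z))‖
        ≤ ‖f' i (U i) - f' i (Up i)‖ + (‖ρ i • (U i - Up i)‖ + ‖ρ i • (Zp - Z)‖) := by
          refine (norm_add_le _ _).trans (by gcongr; exact norm_add_le _ _)
      _ ≤ L i * ‖U i - Up i‖ + (ρ i * ‖U i - Up i‖ + ρ i * ‖Zp - Z‖) := by
          gcongr
          · exact hlip i _ _
          · rw [norm_smul, Real.norm_eq_abs, abs_of_pos (hρ i)]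
          · rw [norm_smul, Real.norm_eq_abs, abs_of_pos (hρ i)]
      _ = (L i + ρ i) * ‖U i - Up i‖ + ρ i * ‖Zp - Z‖ := by ring
      _ = (L i + ρ i) * ‖Up i - U i‖ + ρ i * ‖Zp - Z‖ := by rw [norm_sub_rev]
  have hne := Finset.univ_nonempty_iff.mpr ⟨(⟨0, hN⟩ : Fin N)⟩
  have hsup : ∀ i : Fin N, L i + ρ i ≤ σ₁ := fun i =>
    (Finset.le_sup' (fun i => L i + ρ i) (Finset.mem_univ i)).trans (hσ₁ ▸ le_max_right _ _)
  have hρsum : (∑ i, ρ i) ≤ σ₁ := hσ₁ ▸ le_max_left _ _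
  calc ∑ i, ‖f' i (U i) + Y i + ρ i • (U i - Z)‖
      ≤ ∑ i, ((L i + ρ i) * ‖Up i - U i‖ + ρ i * ‖Zp - Z‖) :=
        Finset.sum_le_sum fun i _ => key i
    _ = (∑ i, (L i + ρ i) * ‖Up i - U i‖) + (∑ i, ρ i) * ‖Zp - Z‖ := by
        rw [Finset.sum_add_distrib, Finset.sum_mul]
    _ ≤ (∑ i, σ₁ * ‖Up i - U i‖) + σ₁ * ‖Zp - Z‖ := by
        gcongr with i
        exact hsup i
    _ = σ₁ * (‖Zp - Z‖ + ∑ i, ‖Up i - U i‖) := by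
        rw [← Finset.mul_sum]; ring
end

section
/- Let E be a real inner product space and N ≥ 1. For each i = 1,…,N let f_i : E → ℝ be differentiable with L_i-Lipschitz gradient and ρ_i > 0. Suppose for each i: ∇f_i(U_i) = −Y_i, ∇f_i(U_i⁺) + Y_i + ρ_i(U_i⁺ − Z⁺) = 0, and Y_i⁺ = Y_i + ρ_i(U_i⁺ − Z⁺). Then there exists a constant σ₃ > 0, depending only on N and the constants L_i, ρ_i, such that Σ_{i=1}^N ‖U_i⁺ − Z⁺‖² + Σ_{i=1}^N ‖∇f_i(U_i) + Y_i + ρ_i(U_i − Z)‖² ≤ σ₃ (‖Z⁺ − Z‖² + Σ_{i=1}^N ‖U_i⁺ − U_i‖²). -/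
/-!
Subtracting the optimality conditions `∇fᵢ(Uᵢ) = -Yᵢ` and `∇fᵢ(Uᵢ⁺) + Yᵢ + ρᵢ(Uᵢ⁺ - Z⁺) = 0` gives
`ρᵢ(Uᵢ⁺ - Z⁺) = ∇fᵢ(Uᵢ) - ∇fᵢ(Uᵢ⁺)`, so the Lipschitz bound controls the primal residual by
`(Lᵢ/ρᵢ)‖Uᵢ⁺ - Uᵢ‖`. The first condition also collapses `∇fᵢ(Uᵢ) + Yᵢ + ρᵢ(Uᵢ - Z)` to
`ρᵢ(Uᵢ - Z)`, and the triangle inequality through `Uᵢ⁺` and `Z⁺` bounds `‖Uᵢ - Z‖` by the same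
quantities. Squaring and summing over the blocks gives the bound.
-/

open Finset

/- `(L/ρ)²` bounds the primal residual; `2(ρ + L)²` and `2ρ²` come from squaring
`ρ‖U - Z‖ ≤ (ρ + L)‖U⁺ - U‖ + ρ‖Z⁺ - Z‖`. -/
noncomputable def admmBlockConst (L ρ : ℝ) : ℝ :=
  (L / ρ) ^ 2 + 2 * (ρ + L) ^ 2 + 2 * ρ ^ 2

lemma admmBlockConst_nonneg (L ρ : ℝ) : 0 ≤ admmBlockConst L ρ := by
  unfold admmBlockConst
  positivity

section ADMMBlock

variable {E : Type*} [NormedAddCommGroup E] [NormedSpace ℝ E]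
  {g : E → E} {L ρ : ℝ} {U Up Z Zp Y : E}

lemma smul_sub_eq_of_admm_step (hU : g U = -Y) (hUp : g Up + Y + ρ • (Up - Zp) = 0) :
    ρ • (Up - Zp) = g U - g Up := by
  rw [hU, ← sub_eq_zero, ← hUp]
  abel

lemma mul_norm_sub_le_of_admm_step (hg : ∀ x y, ‖g x - g y‖ ≤ L * ‖x - y‖)
    (hU : g U = -Y) (hUp : g Up + Y + ρ • (Up - Zp) = 0) :
    ρ * ‖Up - Zp‖ ≤ L * ‖Up - U‖ :=
  calc ρ * ‖Up - Zp‖ ≤ ‖ρ • (Up - Zp)‖ := by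
        rw [norm_smul, Real.norm_eq_abs]
        exact mul_le_mul_of_nonneg_right (le_abs_self ρ) (norm_nonneg _)
    _ = ‖g U - g Up‖ := by rw [smul_sub_eq_of_admm_step hU hUp]
    _ ≤ L * ‖U - Up‖ := hg U Up
    _ = L * ‖Up - U‖ := by rw [norm_sub_rev]

lemma admm_block_sq_le (hρ : 0 < ρ) (hg : ∀ x y, ‖g x - g y‖ ≤ L * ‖x - y‖)
    (hU : g U = -Y) (hUp : g Up + Y + ρ • (Up - Zp) = 0) :
    ‖Up - Zp‖ ^ 2 + ‖g U + Y + ρ • (U - Z)‖ ^ 2 ≤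
      admmBlockConst L ρ * (‖Zp - Z‖ ^ 2 + ‖Up - U‖ ^ 2) := by
  have hres := mul_norm_sub_le_of_admm_step hg hU hUp
  have hprimal : ‖Up - Zp‖ ≤ L / ρ * ‖Up - U‖ := by
    rw [div_mul_eq_mul_div, le_div_iff₀ hρ, mul_comm]
    exact hres
  have hgrad : ‖g U + Y + ρ • (U - Z)‖ = ρ * ‖U - Z‖ := by
    rw [hU, neg_add_cancel, zero_add, norm_smul_of_nonneg hρ.le]
  have htri : ‖U - Z‖ ≤ ‖Up - U‖ + ‖Up - Zp‖ + ‖Zp - Z‖ :=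
    calc ‖U - Z‖ ≤ ‖U - Up‖ + ‖Up - Z‖ := norm_sub_le_norm_sub_add_norm_sub _ _ _
      _ ≤ ‖U - Up‖ + (‖Up - Zp‖ + ‖Zp - Z‖) := by
          gcongr
          exact norm_sub_le_norm_sub_add_norm_sub _ _ _
      _ = ‖Up - U‖ + ‖Up - Zp‖ + ‖Zp - Z‖ := by rw [norm_sub_rev U]; ring
  have hdual : ρ * ‖U - Z‖ ≤ (ρ + L) * ‖Up - U‖ + ρ * ‖Zp - Z‖ := by
    linarith [mul_le_mul_of_nonneg_left htri hρ.le]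
  have hprimal_sq : ‖Up - Zp‖ ^ 2 ≤ (L / ρ) ^ 2 * ‖Up - U‖ ^ 2 := by
    rw [← mul_pow]
    exact pow_le_pow_left₀ (norm_nonneg _) hprimal 2
  have hdual_sq : (ρ * ‖U - Z‖) ^ 2 ≤
      2 * ((ρ + L) ^ 2 * ‖Up - U‖ ^ 2 + ρ ^ 2 * ‖Zp - Z‖ ^ 2) :=
    calc (ρ * ‖U - Z‖) ^ 2 ≤ ((ρ + L) * ‖Up - U‖ + ρ * ‖Zp - Z‖) ^ 2 :=
          pow_le_pow_left₀ (by positivity) hdual 2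
      _ ≤ 2 * (((ρ + L) * ‖Up - U‖) ^ 2 + (ρ * ‖Zp - Z‖) ^ 2) := add_sq_le
      _ = 2 * ((ρ + L) ^ 2 * ‖Up - U‖ ^ 2 + ρ ^ 2 * ‖Zp - Z‖ ^ 2) := by ring
  rw [hgrad, admmBlockConst]
  linarith [mul_nonneg (sq_nonneg (L / ρ)) (sq_nonneg ‖Zp - Z‖),
    mul_nonneg (sq_nonneg (ρ + L)) (sq_nonneg ‖Zp - Z‖),
    mul_nonneg (sq_nonneg ρ) (sq_nonneg ‖Up - U‖)]

end ADMMBlock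

lemma sum_mul_add_le_sum_mul_add_sum {ι : Type*} (s : Finset ι) {κ c : ι → ℝ} (d : ℝ)
    (hκ : ∀ i ∈ s, 0 ≤ κ i) (hc : ∀ i ∈ s, 0 ≤ c i) :
    ∑ i ∈ s, κ i * (d + c i) ≤ (∑ i ∈ s, κ i) * (d + ∑ i ∈ s, c i) := by
  simp only [mul_add, sum_add_distrib, ← sum_mul, mul_sum]
  gcongr with i hi
  · exact hc i hi
  · exact single_le_sum hκ hi

theorem stmt_12_general {E : Type*} [NormedAddCommGroup E] [InnerProductSpace ℝ E] [CompleteSpace E]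
    (N : ℕ)
    (L ρ : Fin N → ℝ) (hρ : ∀ i, 0 < ρ i) :
    ∃ σ₃ : ℝ, 0 < σ₃ ∧
      ∀ (f : Fin N → E → ℝ) (f' : Fin N → E → E),
        (∀ i x, HasGradientAt (f i) (f' i x) x) →
        (∀ i x y, ‖f' i x - f' i y‖ ≤ L i * ‖x - y‖) →
        ∀ (U Up : Fin N → E) (Z Zp : E) (Y Yp : Fin N → E),
          (∀ i, f' i (U i) = -(Y i)) →
          (∀ i, f' i (Up i) + Y i + ρ i • (Up i - Zp) = 0) →
          (∀ i, Yp i = Y i + ρ i • (Up i - Zp)) →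
          (∑ i, ‖Up i - Zp‖ ^ 2) + (∑ i, ‖f' i (U i) + Y i + ρ i • (U i - Z)‖ ^ 2) ≤
            σ₃ * (‖Zp - Z‖ ^ 2 + ∑ i, ‖Up i - U i‖ ^ 2) := by
  set κ : Fin N → ℝ := fun i => admmBlockConst (L i) (ρ i)
  have hκ : ∀ i ∈ univ, 0 ≤ κ i := fun i _ => admmBlockConst_nonneg _ _
  refine ⟨1 + ∑ i, κ i, by linarith [sum_nonneg hκ], ?_⟩
  intro f f' _ hlip U Up Z Zp Y _ hU hUp _
  calc (∑ i, ‖Up i - Zp‖ ^ 2) + (∑ i, ‖f' i (U i) + Y i + ρ i • (U i - Z)‖ ^ 2)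
      = ∑ i, (‖Up i - Zp‖ ^ 2 + ‖f' i (U i) + Y i + ρ i • (U i - Z)‖ ^ 2) :=
        sum_add_distrib.symm
    _ ≤ ∑ i, κ i * (‖Zp - Z‖ ^ 2 + ‖Up i - U i‖ ^ 2) :=
        sum_le_sum fun i _ => admm_block_sq_le (hρ i) (hlip i) (hU i) (hUp i)
    _ ≤ (∑ i, κ i) * (‖Zp - Z‖ ^ 2 + ∑ i, ‖Up i - U i‖ ^ 2) :=
        sum_mul_add_le_sum_mul_add_sum _ _ hκ fun i _ => sq_nonneg _
    _ ≤ (1 + ∑ i, κ i) * (‖Zp - Z‖ ^ 2 + ∑ i, ‖Up i - U i‖ ^ 2) := by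
        gcongr
        linarith

/-- The squared-quantity bound (35) in the proof of Theorem 3: there is a
constant `σ₃ > 0`, depending only on `N` and the constants `Lᵢ`, `ρᵢ`, such
that for all objectives with `Lᵢ`-Lipschitz gradients and all points
satisfying the ADMM optimality/update conditions,
`Σᵢ ‖Uᵢ⁺ - Z⁺‖² + Σᵢ ‖∇fᵢ(Uᵢ) + Yᵢ + ρᵢ(Uᵢ - Z)‖²
  ≤ σ₃(‖Z⁺ - Z‖² + Σᵢ ‖Uᵢ⁺ - Uᵢ‖²)`. -/
theorem stmt_12 {E : Type*} [NormedAddCommGroup E] [InnerProductSpace ℝ E] [CompleteSpace E]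
    (N : ℕ) (hN : 1 ≤ N)
    (L ρ : Fin N → ℝ) (hL : ∀ i, 0 ≤ L i) (hρ : ∀ i, 0 < ρ i) :
    ∃ σ₃ : ℝ, 0 < σ₃ ∧
      ∀ (f : Fin N → E → ℝ) (f' : Fin N → E → E),
        (∀ i x, HasGradientAt (f i) (f' i x) x) →
        (∀ i x y, ‖f' i x - f' i y‖ ≤ L i * ‖x - y‖) →
        ∀ (U Up : Fin N → E) (Z Zp : E) (Y Yp : Fin N → E),
          (∀ i, f' i (U i) = -(Y i)) →
          (∀ i, f' i (Up i) + Y i + ρ i • (Up i - Zp) = 0) →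
          (∀ i, Yp i = Y i + ρ i • (Up i - Zp)) →
          (∑ i, ‖Up i - Zp‖ ^ 2) + (∑ i, ‖f' i (U i) + Y i + ρ i • (U i - Z)‖ ^ 2) ≤
            σ₃ * (‖Zp - Z‖ ^ 2 + ∑ i, ‖Up i - U i‖ ^ 2) :=
  stmt_12_general N L ρ hρ
end
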